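/- arXiv:2402.15520 — 2 statements merged into one kernel-verified Lean document; each statement's English description precedes it below -/
import Mathlib

section
/- Given complex inner product spaces (X₁, ⟨·,·⟩₁) and (X₂, ⟨·,·⟩₂), the formula ⟨x, w⟩_X = e₁⟨x₁, w₁⟩₁ + e₂⟨x₂, w₂⟩₂ defines a bicomplex inner product on the 𝔹ℂ-module X = e₁X₁ ⊕ e₂X₂ (i.e., it is additive, 𝔹ℂ-homogeneous in the first argument, *-conjugate symmetric, and positive). -/
/- Bicomplex numbers in idempotent representation: 𝔹ℂ ≅ ℂ × ℂ (componentwise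
   ring operations), with e₁ = (1,0), e₂ = (0,1) and *-conjugation acting as
   componentwise complex conjugation. -/

/-- The idempotent e₁ in the idempotent representation. -/
def eOne : ℂ × ℂ := (1, 0)

/-- The idempotent e₂ in the idempotent representation. -/
def eTwo : ℂ × ℂ := (0, 1)

/-- The nonnegative hyperbolic numbers 𝔻⁺ = {a₁e₁ + a₂e₂ : a₁, a₂ ≥ 0}. -/
def DPos : Set (ℂ × ℂ) :=
  {h | ∃ a₁ a₂ : ℝ, 0 ≤ a₁ ∧ 0 ≤ a₂ ∧ h = ((a₁ : ℂ), (a₂ : ℂ))}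

/- A 𝔹ℂ-module X = e₁X₁ ⊕ e₂X₂ with componentwise scalar action
   (α₁e₁ + α₂e₂)·(e₁x₁ + e₂x₂) = e₁(α₁x₁) + e₂(α₂x₂). -/
variable {H₁ H₂ : Type*}

instance bcSMul [AddCommGroup H₁] [AddCommGroup H₂] [Module ℂ H₁] [Module ℂ H₂] :
    SMul (ℂ × ℂ) (H₁ × H₂) := ⟨fun α x => (α.1 • x.1, α.2 • x.2)⟩

instance bcModule [AddCommGroup H₁] [AddCommGroup H₂] [Module ℂ H₁] [Module ℂ H₂] :
    Module (ℂ × ℂ) (H₁ × H₂) where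
  one_smul x := by show ((1:ℂ) • x.1, (1:ℂ) • x.2) = x; simp
  mul_smul a b x := by
    show ((a.1*b.1) • x.1, (a.2*b.2) • x.2) = ((a.1 • (b.1 • x.1), a.2 • (b.2 • x.2)) : H₁ × H₂)
    simp [mul_smul]
  smul_add a x y := by
    show (a.1 • (x.1+y.1), a.2 • (x.2+y.2)) = ((a.1 • x.1 + a.1 • y.1, a.2 • x.2 + a.2 • y.2) : H₁ × H₂)
    simp [smul_add]
  smul_zero a := by show (a.1 • (0:H₁), a.2 • (0:H₂)) = 0; simp
  add_smul a b x := by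
    show ((a.1+b.1) • x.1, (a.2+b.2) • x.2) = ((a.1 • x.1 + b.1 • x.1, a.2 • x.2 + b.2 • x.2) : H₁ × H₂)
    simp [add_smul]
  zero_smul x := by show ((0:ℂ) • x.1, (0:ℂ) • x.2) = 0; simp

section BicomplexInner

variable (𝕜 : Type*) [RCLike 𝕜] [NormedAddCommGroup H₁] [InnerProductSpace 𝕜 H₁]
  [NormedAddCommGroup H₂] [InnerProductSpace 𝕜 H₂]

/-- Linear in the first argument, as in the paper; Mathlib's `inner` is linear in the second,
hence the swapped arguments. -/
def bicomplexInner (x w : H₁ × H₂) : 𝕜 × 𝕜 := (inner 𝕜 w.1 x.1, inner 𝕜 w.2 x.2)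

variable {𝕜}

theorem bicomplexInner_add_left (x y z : H₁ × H₂) :
    bicomplexInner 𝕜 (x + y) z = bicomplexInner 𝕜 x z + bicomplexInner 𝕜 y z :=
  Prod.ext (inner_add_right z.1 x.1 y.1) (inner_add_right z.2 x.2 y.2)

theorem star_bicomplexInner (x y : H₁ × H₂) :
    star (bicomplexInner 𝕜 x y) = bicomplexInner 𝕜 y x :=
  Prod.ext (inner_conj_symm x.1 y.1) (inner_conj_symm x.2 y.2)

theorem bicomplexInner_self (x : H₁ × H₂) :
    bicomplexInner 𝕜 x x = (((‖x.1‖ ^ 2 : ℝ) : 𝕜), ((‖x.2‖ ^ 2 : ℝ) : 𝕜)) := by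
  simp only [bicomplexInner, inner_self_eq_norm_sq_to_K, RCLike.ofReal_pow]

theorem bicomplexInner_self_eq_zero {x : H₁ × H₂} : bicomplexInner 𝕜 x x = 0 ↔ x = 0 := by
  simp only [bicomplexInner, Prod.ext_iff, Prod.fst_zero, Prod.snd_zero, inner_self_eq_zero]

end BicomplexInner

section Complex

variable [NormedAddCommGroup H₁] [InnerProductSpace ℂ H₁]
  [NormedAddCommGroup H₂] [InnerProductSpace ℂ H₂]

theorem bicomplexInner_smul_left (α : ℂ × ℂ) (x y : H₁ × H₂) :
    bicomplexInner ℂ (α • x) y = α * bicomplexInner ℂ x y :=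
  Prod.ext (inner_smul_right y.1 x.1 α.1) (inner_smul_right y.2 x.2 α.2)

theorem bicomplexInner_self_mem_DPos (x : H₁ × H₂) : bicomplexInner ℂ x x ∈ DPos :=
  ⟨‖x.1‖ ^ 2, ‖x.2‖ ^ 2, by positivity, by positivity, bicomplexInner_self x⟩

end Complex

/-- Given complex inner product spaces (X₁,⟨·,·⟩₁), (X₂,⟨·,·⟩₂), the formula
    ⟨x,w⟩ = e₁⟨x₁,w₁⟩₁ + e₂⟨x₂,w₂⟩₂ defines a bicomplex inner product on
    X = e₁X₁ ⊕ e₂X₂: additive and 𝔹ℂ-homogeneous in the first argument,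
    *-conjugate symmetric, and positive.  (⟨·,·⟩ᵢ is taken linear in its
    first argument, following the paper's convention.) -/
theorem stmt9 [NormedAddCommGroup H₁] [InnerProductSpace ℂ H₁]
    [NormedAddCommGroup H₂] [InnerProductSpace ℂ H₂]
    (inn : H₁ × H₂ → H₁ × H₂ → ℂ × ℂ)
    (hdefn : ∀ x w : H₁ × H₂, inn x w = ((inner ℂ w.1 x.1 : ℂ), (inner ℂ w.2 x.2 : ℂ))) :
    (∀ x y z : H₁ × H₂, inn (x + y) z = inn x z + inn y z) ∧
    (∀ (α : ℂ × ℂ) (x y : H₁ × H₂), inn (α • x) y = α * inn x y) ∧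
    (∀ x y : H₁ × H₂, inn x y = star (inn y x)) ∧
    (∀ x : H₁ × H₂, inn x x ∈ DPos) ∧
    (∀ x : H₁ × H₂, inn x x = 0 ↔ x = 0) := by
  obtain rfl : inn = bicomplexInner ℂ := funext₂ hdefn
  exact ⟨bicomplexInner_add_left, bicomplexInner_smul_left,
    fun x y => (star_bicomplexInner y x).symm, bicomplexInner_self_mem_DPos,
    fun _ => bicomplexInner_self_eq_zero⟩
end

section
/- If X₁ and X₂ are complex Hilbert spaces, then X = e₁X₁ ⊕ e₂X₂ with inner product ⟨x, w⟩ = e₁⟨x₁, w₁⟩₁ + e₂⟨x₂, w₂⟩₂ is complete with respect to the real-valued norm ‖x‖²_X = (‖x₁‖₁² + ‖x₂‖₂²)/2, i.e., X is a bicomplex Hilbert module. -/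
/- A 𝔹ℂ-module X = e₁X₁ ⊕ e₂X₂ with componentwise scalar action
   (α₁e₁ + α₂e₂)·(e₁x₁ + e₂x₂) = e₁(α₁x₁) + e₂(α₂x₂). -/
variable {H₁ H₂ : Type*}

open Filter Topology

/-! The norm √((‖x₁‖² + ‖x₂‖²)/2) lies between ‖x‖/√2 and ‖x‖, where ‖x‖ is the sup norm of the
product `H₁ × H₂`. That product is complete because both factors are, and equivalent norms have
the same Cauchy sequences and the same limits. -/

section EquivalentNorm

variable {E : Type*} [SeminormedAddCommGroup E] {N : E → ℝ}

theorem cauchySeq_of_norm_le_mul {f : ℕ → E} {C : ℝ} (hC : 0 < C) (hN : ∀ y, ‖y‖ ≤ C * N y)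
    (hf : ∀ ε : ℝ, 0 < ε → ∃ K : ℕ, ∀ m ≥ K, ∀ n ≥ K, N (f m - f n) < ε) : CauchySeq f := by
  refine Metric.cauchySeq_iff.2 fun ε hε => ?_
  obtain ⟨K, hK⟩ := hf (ε / C) (div_pos hε hC)
  refine ⟨K, fun m hm n hn => ?_⟩
  calc dist (f m) (f n) = ‖f m - f n‖ := dist_eq_norm _ _
    _ ≤ C * N (f m - f n) := hN _
    _ < C * (ε / C) := by gcongr; exact hK m hm n hn
    _ = ε := mul_div_cancel₀ ε hC.ne'

theorem tendsto_sub_zero_of_le_mul_norm {α : Type*} {l : Filter α} {f : α → E} {x : E} {C : ℝ}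
    (h0 : ∀ y, 0 ≤ N y) (hN : ∀ y, N y ≤ C * ‖y‖) (hf : Tendsto f l (𝓝 x)) :
    Tendsto (fun n => N (f n - x)) l (𝓝 0) := by
  have hnorm : Tendsto (fun n => C * ‖f n - x‖) l (𝓝 0) := by
    simpa using (tendsto_iff_norm_sub_tendsto_zero.1 hf).const_mul C
  exact squeeze_zero (fun n => h0 _) (fun n => hN _) hnorm

end EquivalentNorm

section ProdNorm

variable {E F : Type*} [SeminormedAddCommGroup E] [SeminormedAddCommGroup F]

theorem sqrt_half_sum_sq_norm_le_norm (y : E × F) :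
    √((‖y.1‖ ^ 2 + ‖y.2‖ ^ 2) / 2) ≤ ‖y‖ := by
  rw [Real.sqrt_le_left (norm_nonneg y)]
  have h₁ := pow_le_pow_left₀ (norm_nonneg _) (norm_fst_le y) 2
  have h₂ := pow_le_pow_left₀ (norm_nonneg _) (norm_snd_le y) 2
  linarith

theorem norm_le_sqrt_two_mul_sqrt_half_sum_sq_norm (y : E × F) :
    ‖y‖ ≤ √2 * √((‖y.1‖ ^ 2 + ‖y.2‖ ^ 2) / 2) := by
  rw [← Real.sqrt_mul zero_le_two, mul_div_cancel₀ _ two_ne_zero, Prod.norm_def]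
  refine max_le ?_ ?_ <;> rw [Real.le_sqrt (norm_nonneg _) (by positivity)]
  · linarith [sq_nonneg ‖y.2‖]
  · linarith [sq_nonneg ‖y.1‖]

end ProdNorm

theorem stmt12_general [NormedAddCommGroup H₁] [CompleteSpace H₁]
    [NormedAddCommGroup H₂] [CompleteSpace H₂]
    (normX : H₁ × H₂ → ℝ)
    (hnorm : ∀ y : H₁ × H₂, normX y = Real.sqrt ((‖y.1‖ ^ 2 + ‖y.2‖ ^ 2) / 2)) :
    ∀ f : ℕ → H₁ × H₂,
      (∀ ε : ℝ, 0 < ε → ∃ N : ℕ, ∀ m ≥ N, ∀ n ≥ N, normX (f m - f n) < ε) →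
      ∃ l : H₁ × H₂, Tendsto (fun n => normX (f n - l)) atTop (𝓝 0) := by
  intro f hf
  obtain rfl : normX = fun y => √((‖y.1‖ ^ 2 + ‖y.2‖ ^ 2) / 2) := funext hnorm
  have hcauchy : CauchySeq f :=
    cauchySeq_of_norm_le_mul (by positivity) norm_le_sqrt_two_mul_sqrt_half_sum_sq_norm hf
  obtain ⟨l, hl⟩ := cauchySeq_tendsto_of_complete hcauchy
  exact ⟨l, tendsto_sub_zero_of_le_mul_norm (fun _ => Real.sqrt_nonneg _)
    (fun y => (sqrt_half_sum_sq_norm_le_norm y).trans_eq (one_mul _).symm) hl⟩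

/-- If X₁ and X₂ are complex Hilbert spaces then X = e₁X₁ ⊕ e₂X₂, with inner
    product ⟨x,w⟩ = e₁⟨x₁,w₁⟩₁ + e₂⟨x₂,w₂⟩₂, is complete with respect to the
    real valued norm ‖x‖²_X = (‖x₁‖₁² + ‖x₂‖₂²)/2: every Cauchy sequence for
    this norm converges, i.e. X is a bicomplex Hilbert module. -/
theorem stmt12 [NormedAddCommGroup H₁] [InnerProductSpace ℂ H₁] [CompleteSpace H₁]
    [NormedAddCommGroup H₂] [InnerProductSpace ℂ H₂] [CompleteSpace H₂]
    (normX : H₁ × H₂ → ℝ)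
    (hnorm : ∀ y : H₁ × H₂, normX y = Real.sqrt ((‖y.1‖ ^ 2 + ‖y.2‖ ^ 2) / 2)) :
    ∀ f : ℕ → H₁ × H₂,
      (∀ ε : ℝ, 0 < ε → ∃ N : ℕ, ∀ m ≥ N, ∀ n ≥ N, normX (f m - f n) < ε) →
      ∃ l : H₁ × H₂, Tendsto (fun n => normX (f n - l)) atTop (𝓝 0) :=
  stmt12_general normX hnorm
end
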